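/- arXiv:1901.09012 — 2 statements merged into one kernel-verified Lean document; each statement's English description precedes it below -/
import Mathlib

section
/- Let f: T_{xm,yn} → T_{m,n} be coordinatewise reduction, with m,n not both 1. If the preimage of every line on T_{m,n} under f is a line on T_{xm,yn}, then τ_{xm,yn} = τ_{m,n}. -/
/-- A line on the discrete torus `ZMod m × ZMod n`: the image of an integer line
`{A + k•(u,v) : k ∈ ℤ}` with `gcd(u,v) = 1`. -/
def torusLine (m n : ℕ) (L : Set (ZMod m × ZMod n)) : Prop :=
  ∃ (A : ZMod m × ZMod n) (u v : ℤ), Int.gcd u v = 1 ∧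
    L = {P | ∃ k : ℤ, P = (A.1 + ((k * u : ℤ) : ZMod m), A.2 + ((k * v : ℤ) : ZMod n))}

/-- Three points of the torus are collinear if some line contains all three. -/
def torusCollinear (m n : ℕ) (P Q R : ZMod m × ZMod n) : Prop :=
  ∃ L, torusLine m n L ∧ P ∈ L ∧ Q ∈ L ∧ R ∈ L

/-- No three (distinct) points of `S` lie on a common line. -/
def noThreeInLine (m n : ℕ) (S : Set (ZMod m × ZMod n)) : Prop :=
  ∀ P ∈ S, ∀ Q ∈ S, ∀ R ∈ S, P ≠ Q → P ≠ R → Q ≠ R → ¬ torusCollinear m n P Q R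

/-- `tau m n`: maximal number of points on the torus with no three collinear. -/
noncomputable def tau (m n : ℕ) : ℕ :=
  sSup {k | ∃ S : Finset (ZMod m × ZMod n), noThreeInLine m n ↑S ∧ S.card = k}

/-!
Reduction modulo `(m, n)` maps lines onto lines, so it preserves collinearity, and a set on `T_{m,n}`
with no three collinear points lifts through any section of the reduction to such a set on
`T_{xm,yn}`. Conversely, if preimages of lines under `f` are lines, then `f` reflects collinearity,
and it is injective on every such set `S` with `|S| ≥ 3`: if `f P = f Q` with `P ≠ Q`, the preimage
of a line through `f P` and `f R` contains `P`, `Q` and `R`. So `f '' S` is again such a set, of the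
same size; smaller sets are covered by `2 ≤ τ_{m,n}`, which holds as soon as `T_{m,n}` has two points.
-/

section

variable {m n M N : ℕ}

def torusReduce (hm : m ∣ M) (hn : n ∣ N) (P : ZMod M × ZMod N) : ZMod m × ZMod n :=
  (ZMod.castHom hm (ZMod m) P.1, ZMod.castHom hn (ZMod n) P.2)

lemma torusReduce_surjective (hm : m ∣ M) (hn : n ∣ N) : Function.Surjective (torusReduce hm hn) :=
  Prod.map_surjective.mpr ⟨ZMod.castHom_surjective hm, ZMod.castHom_surjective hn⟩

lemma exists_torusLine_mem_mem (P Q : ZMod m × ZMod n) :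
    ∃ L, torusLine m n L ∧ P ∈ L ∧ Q ∈ L := by
  obtain ⟨a, ha⟩ := ZMod.intCast_surjective (Q.1 - P.1)
  obtain ⟨b, hb⟩ := ZMod.intCast_surjective (Q.2 - P.2)
  by_cases hab : a = 0 ∧ b = 0
  · obtain ⟨rfl, rfl⟩ := hab
    have hPQ : P = Q := Prod.ext (by simpa [sub_eq_zero, eq_comm] using ha)
      (by simpa [sub_eq_zero, eq_comm] using hb)
    exact ⟨_, ⟨P, 0, 1, by simp, rfl⟩, ⟨0, by simp⟩, ⟨0, by simp [← hPQ]⟩⟩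
  · -- direction `(a, b) / gcd(a, b)`, reaching `Q` at parameter `gcd(a, b)`
    have hg : 0 < Int.gcd a b := Int.gcd_pos_iff.mpr (by omega)
    refine ⟨_, ⟨P, a / Int.gcd a b, b / Int.gcd a b, Int.gcd_div_gcd_div_gcd hg, rfl⟩,
      ⟨0, by simp⟩, ⟨Int.gcd a b, ?_⟩⟩
    rw [Int.mul_ediv_cancel' (Int.gcd_dvd_left a b), Int.mul_ediv_cancel' (Int.gcd_dvd_right a b),
      ha, hb]
    simp

lemma torusCollinear.map_torusReduce (hm : m ∣ M) (hn : n ∣ N) {P Q R : ZMod M × ZMod N}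
    (h : torusCollinear M N P Q R) :
    torusCollinear m n (torusReduce hm hn P) (torusReduce hm hn Q) (torusReduce hm hn R) := by
  obtain ⟨L, ⟨A, u, v, huv, rfl⟩, ⟨i, rfl⟩, ⟨j, rfl⟩, ⟨k, rfl⟩⟩ := h
  refine ⟨_, ⟨torusReduce hm hn A, u, v, huv, rfl⟩, ⟨i, ?_⟩, ⟨j, ?_⟩, ⟨k, ?_⟩⟩ <;>
    simp only [torusReduce, map_add, map_intCast]

lemma torusCollinear_of_preimage_torusLine {f : ZMod M × ZMod N → ZMod m × ZMod n}
    (hf : ∀ L, torusLine m n L → torusLine M N (f ⁻¹' L)) {P Q R : ZMod M × ZMod N}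
    (h : torusCollinear m n (f P) (f Q) (f R)) : torusCollinear M N P Q R :=
  let ⟨L, hL, hP, hQ, hR⟩ := h
  ⟨f ⁻¹' L, hf L hL, hP, hQ, hR⟩

lemma noThreeInLine.image {g : ZMod m × ZMod n → ZMod M × ZMod N}
    (hg : ∀ P Q R, torusCollinear M N (g P) (g Q) (g R) → torusCollinear m n P Q R)
    {S : Set (ZMod m × ZMod n)} (hS : noThreeInLine m n S) : noThreeInLine M N (g '' S) := by
  rintro _ ⟨P, hP, rfl⟩ _ ⟨Q, hQ, rfl⟩ _ ⟨R, hR, rfl⟩ hPQ hPR hQR hcol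
  exact hS P hP Q hQ R hR (ne_of_apply_ne g hPQ) (ne_of_apply_ne g hPR) (ne_of_apply_ne g hQR)
    (hg P Q R hcol)

lemma noThreeInLine_pair (P Q : ZMod m × ZMod n) : noThreeInLine m n {P, Q} := by
  rintro A (rfl | rfl) B (rfl | rfl) C (rfl | rfl) <;> simp

lemma noThreeInLine.injOn_of_preimage_torusLine {f : ZMod M × ZMod N → ZMod m × ZMod n}
    (hf : ∀ L, torusLine m n L → torusLine M N (f ⁻¹' L)) {S : Finset (ZMod M × ZMod N)}
    (hS : noThreeInLine M N S) (hcard : 2 < S.card) : Set.InjOn f S := by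
  intro P hP Q hQ hPQ
  by_contra hne
  obtain ⟨R, hR, hRPQ⟩ := Finset.exists_mem_notMem_of_card_lt_card
    ((Finset.card_le_two : ({P, Q} : Finset _).card ≤ 2).trans_lt hcard)
  simp only [Finset.mem_insert, Finset.mem_singleton, not_or] at hRPQ
  obtain ⟨L, hL, hPL, hRL⟩ := exists_torusLine_mem_mem (f P) (f R)
  exact hS P hP Q hQ R hR hne (Ne.symm hRPQ.1) (Ne.symm hRPQ.2)
    (torusCollinear_of_preimage_torusLine hf ⟨L, hL, hPL, hPQ ▸ hPL, hRL⟩)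

lemma card_le_tau [NeZero m] [NeZero n] {S : Finset (ZMod m × ZMod n)}
    (hS : noThreeInLine m n S) : S.card ≤ tau m n :=
  le_csSup ⟨Fintype.card (ZMod m × ZMod n), by rintro _ ⟨S, -, rfl⟩; exact S.card_le_univ⟩
    ⟨S, hS, rfl⟩

lemma tau_le {k : ℕ} (h : ∀ S : Finset (ZMod m × ZMod n), noThreeInLine m n S → S.card ≤ k) :
    tau m n ≤ k :=
  csSup_le ⟨0, ∅, by simp [noThreeInLine], rfl⟩
    (by rintro _ ⟨S, hS, rfl⟩; exact h S hS)

lemma two_le_tau [NeZero m] [NeZero n] (hmn : ¬(m = 1 ∧ n = 1)) : 2 ≤ tau m n := by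
  have hcard : 1 < Fintype.card (ZMod m × ZMod n) := by
    rw [Fintype.card_prod, ZMod.card, ZMod.card, Nat.one_lt_mul_iff]
    have := NeZero.pos m
    have := NeZero.pos n
    omega
  obtain ⟨P, Q, hPQ⟩ := Fintype.exists_pair_of_one_lt_card hcard
  simpa [Finset.card_pair hPQ] using
    card_le_tau (S := {P, Q}) (by simpa using noThreeInLine_pair P Q)

lemma tau_le_of_preimage_torusLine [NeZero m] [NeZero n] (f : ZMod M × ZMod N → ZMod m × ZMod n)
    (hf : ∀ L, torusLine m n L → torusLine M N (f ⁻¹' L)) (h2 : 2 ≤ tau m n) :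
    tau M N ≤ tau m n := by
  classical
  refine tau_le fun S hS => ?_
  rcases le_or_gt S.card 2 with hcard | hcard
  · exact hcard.trans h2
  · rw [← Finset.card_image_of_injOn (hS.injOn_of_preimage_torusLine hf hcard)]
    refine card_le_tau ?_
    rw [Finset.coe_image]
    exact hS.image fun P Q R => torusCollinear_of_preimage_torusLine hf

lemma tau_le_of_reflects_torusCollinear [NeZero M] [NeZero N]
    {g : ZMod m × ZMod n → ZMod M × ZMod N} (hg : Function.Injective g)
    (hcol : ∀ P Q R, torusCollinear M N (g P) (g Q) (g R) → torusCollinear m n P Q R) :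
    tau m n ≤ tau M N := by
  classical
  refine tau_le fun S hS => ?_
  rw [← Finset.card_image_of_injective S hg]
  refine card_le_tau ?_
  rw [Finset.coe_image]
  exact hS.image hcol

lemma tau_le_tau_of_dvd [NeZero M] [NeZero N] (hm : m ∣ M) (hn : n ∣ N) : tau m n ≤ tau M N := by
  obtain ⟨g, hg⟩ := (torusReduce_surjective hm hn).hasRightInverse
  refine tau_le_of_reflects_torusCollinear hg.injective fun P Q R hcol => ?_
  simpa only [hg _] using hcol.map_torusReduce hm hn

end

theorem stmt5_general (m n x y : ℕ) (hm : 0 < m) (hn : 0 < n) (hx : 0 < x) (hy : 0 < y)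
    (hmn : ¬ (m = 1 ∧ n = 1))
    (f : ZMod (x * m) × ZMod (y * n) → ZMod m × ZMod n)
    (hpre : ∀ L : Set (ZMod m × ZMod n), torusLine m n L →
      torusLine (x * m) (y * n) (f ⁻¹' L)) :
    tau (x * m) (y * n) = tau m n := by
  have := NeZero.of_pos hm
  have := NeZero.of_pos hn
  have := NeZero.of_pos (Nat.mul_pos hx hm)
  have := NeZero.of_pos (Nat.mul_pos hy hn)
  exact le_antisymm (tau_le_of_preimage_torusLine f hpre (two_le_tau hmn))
    (tau_le_tau_of_dvd (dvd_mul_left m x) (dvd_mul_left n y))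

theorem stmt5 (m n x y : ℕ) (hm : 0 < m) (hn : 0 < n) (hx : 0 < x) (hy : 0 < y)
    (hmn : ¬ (m = 1 ∧ n = 1))
    (f : ZMod (x * m) × ZMod (y * n) → ZMod m × ZMod n)
    (hf : f = fun P => (ZMod.castHom (dvd_mul_left m x) (ZMod m) P.1,
                        ZMod.castHom (dvd_mul_left n y) (ZMod n) P.2))
    (hpre : ∀ L : Set (ZMod m × ZMod n), torusLine m n L →
      torusLine (x * m) (y * n) (f ⁻¹' L)) :
    tau (x * m) (y * n) = tau m n :=
  stmt5_general m n x y hm hn hx hy hmn f hpre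
end

section
/- Let p be prime and A, B, C points on T_{p^a,p^b} such that A and B have the same image under the reduction map to T_{p^{a-1},p^b}. If every line on T_{p^a,p^b} containing both A and C has the same length as its image on T_{p^{a-1},p^b}, then A, B, C are not collinear on T_{p^a,p^b}. -/
/-- Reduction of the first coordinate from `ZMod (p^a)` to `ZMod (p^(a-1))`. -/
def reduceFst (p a b : ℕ) : ZMod (p ^ a) × ZMod (p ^ b) → ZMod (p ^ (a - 1)) × ZMod (p ^ b) :=
  fun P => (ZMod.castHom (pow_dvd_pow p (Nat.sub_le a 1)) (ZMod (p ^ (a - 1))) P.1, P.2)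

theorem stmt15 (p a b : ℕ) (hp : p.Prime) (ha : 0 < a)
    (A B C : ZMod (p ^ a) × ZMod (p ^ b)) (hAB : A ≠ B)
    (hred : reduceFst p a b A = reduceFst p a b B)
    (hlen : ∀ L : Set (ZMod (p ^ a) × ZMod (p ^ b)),
      torusLine (p ^ a) (p ^ b) L → A ∈ L → C ∈ L →
        Nat.card (reduceFst p a b '' L) = Nat.card L) :
    ¬ torusCollinear (p ^ a) (p ^ b) A B C := by
  haveI : NeZero (p ^ a) := ⟨pow_ne_zero a hp.ne_zero⟩
  haveI : NeZero (p ^ b) := ⟨pow_ne_zero b hp.ne_zero⟩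
  rintro ⟨L, hL, hA, hB, hC⟩
  have hfin : L.Finite := Set.toFinite L
  have h := hlen L hL hA hC
  rw [Nat.card_coe_set_eq, Nat.card_coe_set_eq] at h
  have hinj := Set.injOn_of_ncard_image_eq h hfin
  exact hAB (hinj hA hB hred)
end
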